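/- arXiv:1607.02079 — 2 statements merged into one kernel-verified Lean document; each statement's English description precedes it below -/
import Mathlib

section
/- If G is a finitely generated fully residually free group (limit group) with rational rank rk_Q(G) = dim_Q(G^ab ⊗ Q) equal to 1, then G is isomorphic to the infinite cyclic group Z. -/
open scoped TensorProduct

/-- A group is fully residually free if every finite subset is mapped injectively
by some homomorphism to a free group. -/
def FullyResiduallyFree (G : Type*) [Group G] : Prop :=
  ∀ T : Finset G, ∃ (α : Type) (f : G →* FreeGroup α), Set.InjOn f T

/-- The rational rank `rk_Q(G) = dim_Q (G^ab ⊗_Z Q)`. -/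
noncomputable def rkQ (G : Type*) [Group G] : ℕ :=
  Module.finrank ℚ (ℚ ⊗[ℤ] Additive (Abelianization G))

/-- The minimal number of generators of a group. -/
noncomputable def d (G : Type*) [Group G] : ℕ :=
  sInf {n | ∃ S : Finset G, S.card = n ∧ Subgroup.closure (S : Set G) = ⊤}


/-! Two non-commuting elements of a fully residually free group stay non-commuting in their image
in some free group. By Nielsen–Schreier that image is itself free, on at least two generators, so
it maps onto `ℤ²` and `rk_Q(G) ≥ 2`. Hence `G` is abelian; residual freeness also makes it
torsion-free, so being finitely generated it is free abelian, of rank `rk_Q(G) = 1`. -/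

theorem FreeGroup.commute_of_subsingleton {β : Type*} [Subsingleton β] (u v : FreeGroup β) :
    Commute u v := by
  rcases isEmpty_or_nonempty β with _ | _
  · exact Subsingleton.elim _ _
  · have : Unique β := uniqueOfSubsingleton (Classical.arbitrary β)
    let := IsCyclic.commGroup (α := FreeGroup β)
    exact mul_comm u v

theorem FreeGroup.exists_surjective_prod_int {β : Type*} {x y : β} (hxy : x ≠ y) :
    ∃ χ : FreeGroup β →* Multiplicative (ℤ × ℤ), Function.Surjective χ := by
  classical
  refine ⟨FreeGroup.lift fun c => if c = x then Multiplicative.ofAdd (1, 0)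
    else if c = y then Multiplicative.ofAdd (0, 1) else 1, fun z => ?_⟩
  refine ⟨FreeGroup.of x ^ z.toAdd.1 * FreeGroup.of y ^ z.toAdd.2, ?_⟩
  apply Multiplicative.toAdd.injective
  simp [hxy.symm]

theorem IsFreeGroup.exists_surjective_prod_int_of_not_commute {H : Type*} [Group H]
    [IsFreeGroup H] {a b : H} (hab : ¬ Commute a b) :
    ∃ χ : H →* Multiplicative (ℤ × ℤ), Function.Surjective χ := by
  let e := IsFreeGroup.toFreeGroup H
  obtain ⟨x, y, hxy⟩ : Nontrivial (IsFreeGroup.Generators H) := by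
    by_contra hsub
    rw [not_nontrivial_iff_subsingleton] at hsub
    exact hab (by simpa using (FreeGroup.commute_of_subsingleton (e a) (e b)).map e.symm)
  obtain ⟨χ, hχ⟩ := FreeGroup.exists_surjective_prod_int hxy
  exact ⟨χ.comp e.toMonoidHom, hχ.comp e.surjective⟩

namespace FullyResiduallyFree

variable {G : Type*} [Group G]

theorem isMulTorsionFree (hG : FullyResiduallyFree G) : IsMulTorsionFree G where
  pow_left_injective n hn g h hgh := by
    classical
    obtain ⟨α, f, hf⟩ := hG {g, h}
    refine hf (by simp) (by simp) (IsMulTorsionFree.pow_left_injective hn ?_)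
    simp only [← map_pow]
    exact congrArg f hgh

theorem exists_surjective_prod_int_of_not_commute (hG : FullyResiduallyFree G) {a b : G}
    (hab : ¬ Commute a b) : ∃ χ : G →* Multiplicative (ℤ × ℤ), Function.Surjective χ := by
  classical
  obtain ⟨α, f, hf⟩ := hG {a * b, b * a}
  have hfab : ¬ Commute (f.rangeRestrict a) (f.rangeRestrict b) := fun hc =>
    hab (hf (by simp) (by simp) (by simpa using congrArg Subtype.val hc.eq))
  obtain ⟨χ, hχ⟩ := IsFreeGroup.exists_surjective_prod_int_of_not_commute hfab
  exact ⟨χ.comp f.rangeRestrict, hχ.comp f.rangeRestrict_surjective⟩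

end FullyResiduallyFree

theorem rkQ_ne_one_of_surjective {G : Type*} [Group G] {χ : G →* Multiplicative (ℤ × ℤ)}
    (hχ : Function.Surjective χ) : rkQ G ≠ 1 := by
  intro h1
  let φ : Additive (Abelianization G) →ₗ[ℤ] ℤ × ℤ :=
    (MonoidHom.toAdditiveLeft (Abelianization.lift χ)).toIntLinearMap
  have hφ : Function.Surjective φ := fun z => by
    obtain ⟨g, hg⟩ := hχ (Multiplicative.ofAdd z)
    exact ⟨Additive.ofMul (Abelianization.of g),
      by simpa [φ] using congrArg Multiplicative.toAdd hg⟩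
  have : Module.Finite ℚ (ℚ ⊗[ℤ] Additive (Abelianization G)) :=
    Module.finite_of_finrank_eq_succ h1
  have hφℚ : Function.Surjective (φ.baseChange ℚ) := by
    rw [LinearMap.baseChange_eq_ltensor]
    exact LinearMap.lTensor_surjective ℚ hφ
  have hle := LinearMap.finrank_le_finrank_of_surjective hφℚ
  rw [Module.finrank_baseChange, Module.finrank_prod, Module.finrank_self] at hle
  rw [rkQ] at h1
  omega

theorem rkQ_eq_finrank_int (G : Type*) [CommGroup G] [Group.FG G] [IsMulTorsionFree G] :
    rkQ G = Module.finrank ℤ (Additive G) := by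
  have : Module.Finite ℤ (Additive G) := Module.Finite.iff_addGroup_fg.mpr inferInstance
  let e : Additive (Abelianization G) ≃ₗ[ℤ] Additive G :=
    (MulEquiv.toAdditive Abelianization.equivOfComm.symm).toIntLinearEquiv
  rw [rkQ, (e.baseChange ℤ ℚ _ _).finrank_eq, Module.finrank_baseChange]

theorem nonempty_mulEquiv_int_of_rkQ_eq_one {G : Type*} [CommGroup G] [Group.FG G]
    [IsMulTorsionFree G] (h1 : rkQ G = 1) : Nonempty (G ≃* Multiplicative ℤ) := by
  have : Module.Finite ℤ (Additive G) := Module.Finite.iff_addGroup_fg.mpr inferInstance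
  have hrank : Module.finrank ℤ (Additive G) = Module.finrank ℤ ℤ := by
    rw [← rkQ_eq_finrank_int, h1, Module.finrank_self]
  exact ⟨MulEquiv.toAdditiveLeft.symm (LinearEquiv.ofFinrankEq _ _ hrank).toAddEquiv⟩

theorem limitGroup_rkQ_eq_one (G : Type*) [Group G] [Group.FG G]
    (hG : FullyResiduallyFree G) (h1 : rkQ G = 1) :
    Nonempty (G ≃* Multiplicative ℤ) := by
  have hcomm : ∀ a b : G, Commute a b := fun a b => by
    by_contra hab
    obtain ⟨χ, hχ⟩ := hG.exists_surjective_prod_int_of_not_commute hab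
    exact rkQ_ne_one_of_surjective hχ h1
  let : CommGroup G := { mul_comm := fun a b => (hcomm a b).eq }
  have := hG.isMulTorsionFree
  exact nonempty_mulEquiv_int_of_rkQ_eq_one h1
end

section
/- Let F₂ = F(a,b) be the free group of rank 2, w = a²ba⁻¹b⁻¹ ∈ F₂, and let G = F₂ ∗_{⟨w⟩=⟨w⟩} F₂ be the double of F₂ along the cyclic subgroup generated by w. Then G^ab ≅ Z³, so d(G^ab) = 3, while d(G) = 4. -/
open scoped TensorProduct

/-- The amalgamated free product `G₁ ∗_H G₂` along `f₁ : H →* G₁`, `f₂ : H →* G₂`. -/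
def AmalgamatedProduct {G₁ G₂ H : Type*} [Group G₁] [Group G₂] [Group H]
    (f₁ : H →* G₁) (f₂ : H →* G₂) : Type _ :=
  Monoid.Coprod G₁ G₂ ⧸ Subgroup.normalClosure
    (Set.range fun h => Monoid.Coprod.inl (f₁ h) * (Monoid.Coprod.inr (f₂ h))⁻¹)

instance {G₁ G₂ H : Type*} [Group G₁] [Group G₂] [Group H]
    (f₁ : H →* G₁) (f₂ : H →* G₂) : Group (AmalgamatedProduct f₁ f₂) :=
  QuotientGroup.Quotient.group _

/-- The canonical map `G₁ →* G₁ ∗_H G₂`. -/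
def AmalgamatedProduct.inl {G₁ G₂ H : Type*} [Group G₁] [Group G₂] [Group H]
    (f₁ : H →* G₁) (f₂ : H →* G₂) : G₁ →* AmalgamatedProduct f₁ f₂ :=
  (QuotientGroup.mk' _).comp Monoid.Coprod.inl

/-- The canonical map `G₂ →* G₁ ∗_H G₂`. -/
def AmalgamatedProduct.inr {G₁ G₂ H : Type*} [Group G₁] [Group G₂] [Group H]
    (f₁ : H →* G₁) (f₂ : H →* G₂) : G₂ →* AmalgamatedProduct f₁ f₂ :=
  (QuotientGroup.mk' _).comp Monoid.Coprod.inr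

/-!
In an abelian group `a²ba⁻¹b⁻¹` becomes `a`, so amalgamating `⟨w⟩` only identifies the two
copies of `a` in the abelianization, which is therefore `ℤ³` with basis `a, b₁, b₂`. A group
generated by `k` elements has at most `|Q| ^ k` homomorphisms to a finite group `Q`; with
`Q = ℤ/2` this gives `d(ℤⁿ) = n`.

The double is generated by the two generating pairs of its factors. Conversely, a homomorphism
from the double to `Q` is a choice of `(a₁, b₁, a₂, b₂)` with
`a₁²b₁a₁⁻¹b₁⁻¹ = a₂²b₂a₂⁻¹b₂⁻¹`; for `Q = D₃ ≅ S₃` there are more than `6³` such quadruples, so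
three elements cannot generate.
-/

namespace AmalgamatedProduct

variable {G₁ G₂ H P : Type*} [Group G₁] [Group G₂] [Group H] [Group P]
  (f₁ : H →* G₁) (f₂ : H →* G₂)

def lift (k₁ : G₁ →* P) (k₂ : G₂ →* P) (hk : ∀ h, k₁ (f₁ h) = k₂ (f₂ h)) :
    AmalgamatedProduct f₁ f₂ →* P :=
  QuotientGroup.lift _ (Monoid.Coprod.lift k₁ k₂) <| Subgroup.normalClosure_le_normal <| by
    rintro _ ⟨h, rfl⟩
    simp [hk]

@[simp]
theorem lift_inl (k₁ : G₁ →* P) (k₂ : G₂ →* P) (hk) (g : G₁) :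
    lift f₁ f₂ k₁ k₂ hk (inl f₁ f₂ g) = k₁ g :=
  Monoid.Coprod.lift_apply_inl k₁ k₂ g

@[simp]
theorem lift_inr (k₁ : G₁ →* P) (k₂ : G₂ →* P) (hk) (g : G₂) :
    lift f₁ f₂ k₁ k₂ hk (inr f₁ f₂ g) = k₂ g :=
  Monoid.Coprod.lift_apply_inr k₁ k₂ g

theorem inl_comp_eq_inr_comp : (inl f₁ f₂).comp f₁ = (inr f₁ f₂).comp f₂ := by
  ext h
  exact QuotientGroup.eq_iff_div_mem.2
    (Subgroup.subset_normalClosure ⟨h, (div_eq_mul_inv _ _).symm⟩)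

@[ext]
theorem hom_ext {φ ψ : AmalgamatedProduct f₁ f₂ →* P}
    (h₁ : φ.comp (inl f₁ f₂) = ψ.comp (inl f₁ f₂))
    (h₂ : φ.comp (inr f₁ f₂) = ψ.comp (inr f₁ f₂)) : φ = ψ :=
  QuotientGroup.monoidHom_ext _ (Monoid.Coprod.hom_ext h₁ h₂)

theorem range_inl_sup_range_inr : (inl f₁ f₂).range ⊔ (inr f₁ f₂).range = ⊤ := by
  refine (Subgroup.eq_top_iff' _).2 fun x => ?_
  obtain ⟨x, rfl⟩ := QuotientGroup.mk_surjective x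
  induction x using Monoid.Coprod.induction_on with
  | inl g => exact Subgroup.mem_sup_left ⟨g, rfl⟩
  | inr g => exact Subgroup.mem_sup_right ⟨g, rfl⟩
  | mul x y hx hy => exact mul_mem hx hy

theorem closure_image_inl_union_image_inr {S₁ : Set G₁} {S₂ : Set G₂}
    (h₁ : Subgroup.closure S₁ = ⊤) (h₂ : Subgroup.closure S₂ = ⊤) :
    Subgroup.closure (inl f₁ f₂ '' S₁ ∪ inr f₁ f₂ '' S₂) = ⊤ := by
  rw [Subgroup.closure_union, ← MonoidHom.map_closure, ← MonoidHom.map_closure, h₁, h₂,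
    ← MonoidHom.range_eq_map, ← MonoidHom.range_eq_map, range_inl_sup_range_inr]

instance [Group.FG G₁] [Group.FG G₂] : Group.FG (AmalgamatedProduct f₁ f₂) := by
  classical
  obtain ⟨S₁, -, hS₁⟩ := Group.rank_spec G₁
  obtain ⟨S₂, -, hS₂⟩ := Group.rank_spec G₂
  refine ⟨⟨S₁.image (inl f₁ f₂) ∪ S₂.image (inr f₁ f₂), ?_⟩⟩
  push_cast
  exact closure_image_inl_union_image_inr f₁ f₂ hS₁ hS₂

theorem rank_le_add [Group.FG G₁] [Group.FG G₂] :
    Group.rank (AmalgamatedProduct f₁ f₂) ≤ Group.rank G₁ + Group.rank G₂ := by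
  classical
  obtain ⟨S₁, hc₁, hS₁⟩ := Group.rank_spec G₁
  obtain ⟨S₂, hc₂, hS₂⟩ := Group.rank_spec G₂
  calc Group.rank (AmalgamatedProduct f₁ f₂)
      ≤ (S₁.image (inl f₁ f₂) ∪ S₂.image (inr f₁ f₂)).card :=
        Group.rank_le (by push_cast; exact closure_image_inl_union_image_inr f₁ f₂ hS₁ hS₂)
    _ ≤ S₁.card + S₂.card :=
        (Finset.card_union_le _ _).trans (add_le_add Finset.card_image_le Finset.card_image_le)
    _ = Group.rank G₁ + Group.rank G₂ := by rw [hc₁, hc₂]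

end AmalgamatedProduct

section Rank

variable (G Q : Type*) [Group G] [Group Q]

theorem d_eq_rank [Group.FG G] : d G = Group.rank G :=
  le_antisymm (Nat.sInf_le (Group.rank_spec G))
    (le_csInf ⟨_, Group.rank_spec G⟩ fun _ ⟨_, hS, h⟩ => hS ▸ Group.rank_le h)

variable {G Q} in
theorem MonoidHom.restrict_injective_of_closure_eq_top {S : Set G}
    (hS : Subgroup.closure S = ⊤) : Function.Injective fun (φ : G →* Q) (s : S) => φ s :=
  fun _ _ h => MonoidHom.eq_of_eqOn_dense hS fun s hs => congr_fun h ⟨s, hs⟩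

theorem Group.card_monoidHom_le_pow_rank [Group.FG G] [Finite Q] :
    Nat.card (G →* Q) ≤ Nat.card Q ^ Group.rank G := by
  obtain ⟨S, hc, hS⟩ := Group.rank_spec G
  have := Nat.card_le_card_of_injective _
    (MonoidHom.restrict_injective_of_closure_eq_top (Q := Q) hS)
  simpa [Nat.card_fun, hc] using this

instance [Group.FG G] : Group.FG (Abelianization G) :=
  Group.fg_of_surjective (QuotientGroup.mk'_surjective _)

theorem FreeGroup.rank_le_card (α : Type*) [Fintype α] [DecidableEq α] :
    Group.rank (FreeGroup α) ≤ Fintype.card α :=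
  calc Group.rank (FreeGroup α)
      ≤ (Finset.univ.image (FreeGroup.of (α := α))).card :=
        Group.rank_le (by simp)
    _ ≤ Fintype.card α := Finset.card_image_le

end Rank

section FreeAbelian

open Multiplicative

variable (ι : Type*) [Fintype ι] [DecidableEq ι]

noncomputable def piIntHomEquiv (A : Type*) [CommGroup A] :
    (Multiplicative (ι → ℤ) →* A) ≃ (ι → A) :=
  AddMonoidHom.toMultiplicativeLeft.symm.trans <| (addMonoidHomLequivInt ℤ).toEquiv.trans <|
    ((Pi.basisFun ℤ ι).constr ℤ).symm.toEquiv.trans <| Equiv.piCongrRight fun _ => Additive.toMul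

@[simp]
theorem piIntHomEquiv_apply {A : Type*} [CommGroup A] (φ : Multiplicative (ι → ℤ) →* A) (i : ι) :
    piIntHomEquiv ι A φ i = φ (ofAdd (Pi.single i 1)) := by
  simp [piIntHomEquiv]

@[simp]
theorem piIntHomEquiv_symm_apply_ofAdd_single {A : Type*} [CommGroup A] (v : ι → A) (i : ι) :
    (piIntHomEquiv ι A).symm v (ofAdd (Pi.single i 1)) = v i := by
  rw [← piIntHomEquiv_apply, Equiv.apply_symm_apply]

theorem closure_range_ofAdd_single :
    Subgroup.closure (Set.range fun i : ι => ofAdd (Pi.single i (1 : ℤ))) = ⊤ := by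
  refine (Subgroup.eq_top_iff' _).2 fun x => ?_
  have hx : x = ∏ i, ofAdd (Pi.single i (1 : ℤ)) ^ toAdd x i := by
    apply toAdd.injective
    funext j
    simp [Finset.sum_apply, Pi.single_apply]
  rw [hx]
  exact Subgroup.prod_mem _ fun i _ => zpow_mem (Subgroup.subset_closure (Set.mem_range_self i)) _

theorem rank_multiplicative_pi_int : Group.rank (Multiplicative (ι → ℤ)) = Fintype.card ι := by
  refine le_antisymm ?_ ?_
  · calc Group.rank (Multiplicative (ι → ℤ))
        ≤ (Finset.univ.image fun i : ι => ofAdd (Pi.single i (1 : ℤ))).card :=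
          Group.rank_le (by simpa using closure_range_ofAdd_single ι)
      _ ≤ Fintype.card ι := Finset.card_image_le
  · have h := Group.card_monoidHom_le_pow_rank (Multiplicative (ι → ℤ)) (Multiplicative (ZMod 2))
    rw [Nat.card_congr (piIntHomEquiv ι _), Nat.card_fun] at h
    simp only [Nat.card_eq_fintype_card, Fintype.card_multiplicative, ZMod.card] at h
    exact (Nat.pow_le_pow_iff_right (by norm_num)).1 h

end FreeAbelian

abbrev Double (F : Type*) [Group F] (w : F) : Type _ :=
  AmalgamatedProduct (zpowersHom F w) (zpowersHom F w)

namespace Double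

open AmalgamatedProduct

variable {F P : Type*} [Group F] [Group P] {w : F}

theorem inl_self : inl (zpowersHom F w) (zpowersHom F w) w = inr _ _ w := by
  simpa using DFunLike.congr_fun (inl_comp_eq_inr_comp (zpowersHom F w) (zpowersHom F w))
    (Multiplicative.ofAdd 1)

def lift (k₁ k₂ : F →* P) (h : k₁ w = k₂ w) : Double F w →* P :=
  AmalgamatedProduct.lift _ _ k₁ k₂ fun n => by simp [h]

variable (F P w) in
def homEquiv : (Double F w →* P) ≃ {k : (F →* P) × (F →* P) // k.1 w = k.2 w} where
  toFun φ := ⟨(φ.comp (inl _ _), φ.comp (inr _ _)), by simp [inl_self]⟩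
  invFun k := lift k.1.1 k.1.2 k.2
  left_inv φ := by ext <;> simp [lift]
  right_inv k := by ext <;> simp [lift]

end Double

open FreeGroup in
def w₀ : FreeGroup (Fin 2) := of 0 * of 0 * of 1 * (of 0)⁻¹ * (of 1)⁻¹

theorem map_w₀ {P : Type*} [Group P] (k : FreeGroup (Fin 2) →* P) :
    k w₀ = k (.of 0) * k (.of 0) * k (.of 1) * (k (.of 0))⁻¹ * (k (.of 1))⁻¹ := by
  simp [w₀]

theorem map_w₀_of_comm {A : Type*} [CommGroup A] (k : FreeGroup (Fin 2) →* A) :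
    k w₀ = k (.of 0) := by
  rw [map_w₀, mul_right_comm (k (.of 0) * k (.of 0)), mul_inv_cancel_right, mul_inv_cancel_right]

theorem card_monoidHom_double_w₀ (P : Type*) [Group P] :
    Nat.card (Double (FreeGroup (Fin 2)) w₀ →* P) =
      Nat.card {q : (P × P) × (P × P) //
        q.1.1 * q.1.1 * q.1.2 * q.1.1⁻¹ * q.1.2⁻¹ = q.2.1 * q.2.1 * q.2.2 * q.2.1⁻¹ * q.2.2⁻¹} := by
  let e : (FreeGroup (Fin 2) →* P) ≃ P × P := FreeGroup.lift.symm.trans (piFinTwoEquiv fun _ => P)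
  exact Nat.card_congr <| (Double.homEquiv _ _ _).trans <|
    Equiv.subtypeEquiv (e.prodCongr e) fun k => by simp [e, map_w₀]

set_option maxRecDepth 100000 in
theorem six_pow_three_lt_card_monoidHom_dihedralGroup :
    6 ^ 3 < Nat.card (Double (FreeGroup (Fin 2)) w₀ →* DihedralGroup 3) := by
  rw [card_monoidHom_double_w₀, Nat.card_eq_fintype_card]
  decide

theorem rank_double_w₀ : Group.rank (Double (FreeGroup (Fin 2)) w₀) = 4 := by
  refine le_antisymm ?_ ?_
  · calc Group.rank (Double (FreeGroup (Fin 2)) w₀)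
        ≤ Group.rank (FreeGroup (Fin 2)) + Group.rank (FreeGroup (Fin 2)) :=
          AmalgamatedProduct.rank_le_add _ _
      _ ≤ 2 + 2 := add_le_add (FreeGroup.rank_le_card _) (FreeGroup.rank_le_card _)
  · have h := six_pow_three_lt_card_monoidHom_dihedralGroup.trans_le
      (Group.card_monoidHom_le_pow_rank _ (DihedralGroup 3))
    rw [DihedralGroup.nat_card] at h
    exact (Nat.pow_lt_pow_iff_right (by norm_num)).1 h

section Abelianization

open AmalgamatedProduct Multiplicative

theorem abelianization_of_inr_eq_of_inl :
    Abelianization.of (inr (zpowersHom _ w₀) (zpowersHom _ w₀) (.of 0)) =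
      Abelianization.of (inl (zpowersHom _ w₀) (zpowersHom _ w₀) (.of 0)) := by
  have hl := map_w₀_of_comm (Abelianization.of.comp (inl (zpowersHom _ w₀) (zpowersHom _ w₀)))
  have hr := map_w₀_of_comm (Abelianization.of.comp (inr (zpowersHom _ w₀) (zpowersHom _ w₀)))
  simp only [MonoidHom.comp_apply, Double.inl_self] at hl hr
  rw [← hl, hr]

noncomputable def abelianizationDoubleW₀ToPi :
    Abelianization (Double (FreeGroup (Fin 2)) w₀) →* Multiplicative (Fin 3 → ℤ) :=
  let e (i : Fin 3) : Multiplicative (Fin 3 → ℤ) := ofAdd (Pi.single i 1)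
  Abelianization.lift <| Double.lift (FreeGroup.lift ![e 0, e 1]) (FreeGroup.lift ![e 0, e 2]) <| by
    rw [map_w₀_of_comm, map_w₀_of_comm]
    simp

noncomputable def abelianizationDoubleW₀OfPi :
    Multiplicative (Fin 3 → ℤ) →* Abelianization (Double (FreeGroup (Fin 2)) w₀) :=
  (piIntHomEquiv (Fin 3) _).symm ![Abelianization.of (inl _ _ (.of 0)),
    Abelianization.of (inl _ _ (.of 1)), Abelianization.of (inr _ _ (.of 1))]

noncomputable def abelianizationDoubleW₀Equiv :
    Abelianization (Double (FreeGroup (Fin 2)) w₀) ≃* Multiplicative (Fin 3 → ℤ) :=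
  MonoidHom.toMulEquiv abelianizationDoubleW₀ToPi abelianizationDoubleW₀OfPi
    (by
      ext i <;> fin_cases i <;>
        simp [abelianizationDoubleW₀ToPi, abelianizationDoubleW₀OfPi, Double.lift,
          abelianization_of_inr_eq_of_inl])
    ((piIntHomEquiv (Fin 3) _).injective <| funext fun i => by
      fin_cases i <;> simp [abelianizationDoubleW₀ToPi, abelianizationDoubleW₀OfPi, Double.lift])

end Abelianization

theorem double_of_F2_dab_three_d_four
    (w : FreeGroup (Fin 2))
    (hw : w = FreeGroup.of 0 * FreeGroup.of 0 * FreeGroup.of 1 *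
      (FreeGroup.of 0)⁻¹ * (FreeGroup.of 1)⁻¹) :
    Nonempty (Abelianization (AmalgamatedProduct
        (zpowersHom (FreeGroup (Fin 2)) w) (zpowersHom (FreeGroup (Fin 2)) w))
      ≃* Multiplicative (Fin 3 → ℤ)) ∧
    d (Abelianization (AmalgamatedProduct
        (zpowersHom (FreeGroup (Fin 2)) w) (zpowersHom (FreeGroup (Fin 2)) w))) = 3 ∧
    d (AmalgamatedProduct
        (zpowersHom (FreeGroup (Fin 2)) w) (zpowersHom (FreeGroup (Fin 2)) w)) = 4 := by
  subst hw
  refine ⟨⟨abelianizationDoubleW₀Equiv⟩, ?_, ?_⟩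
  · show d (Abelianization (Double (FreeGroup (Fin 2)) w₀)) = 3
    rw [d_eq_rank, Group.rank_congr abelianizationDoubleW₀Equiv, rank_multiplicative_pi_int,
      Fintype.card_fin]
  · show d (Double (FreeGroup (Fin 2)) w₀) = 4
    rw [d_eq_rank, rank_double_w₀]
end
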